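/- Let 1 ≤ d ≤ q²−1 and d^⊥ = 2(q²−1)−d. For every monomial M ∈ U, the evaluation ev(M) belongs to (PRM_{d^⊥}(q²,2))^q. Moreover, if d ≤ 2(q−1), then U = A₁^d. -/
import Mathlib


open MvPolynomial

/-- The fixed representatives of the points of the projective plane over `F`:
the leftmost nonzero coordinate equals 1. -/
def stdRep (F : Type*) [Field F] : Set (Fin 3 → F) :=
  {v | v 0 = 1 ∨ (v 0 = 0 ∧ v 1 = 1) ∨ (v 0 = 0 ∧ v 1 = 0 ∧ v 2 = 1)}

/-- The evaluation map at the fixed representatives. -/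
noncomputable def ev (F : Type*) [Field F] :
    MvPolynomial (Fin 3) F →ₗ[F] (stdRep F → F) :=
  LinearMap.pi fun Q => (aeval (Q : Fin 3 → F)).toLinearMap

/-- The projective Reed–Muller code of degree `d` over the projective plane. -/
noncomputable def PRM (F : Type*) [Field F] (d : ℕ) : Submodule F (stdRep F → F) :=
  (homogeneousSubmodule (Fin 3) F d).map (ev F)

/-- The componentwise `q`-th power of a set of vectors. -/
def powq {F : Type*} [Field F] (q : ℕ) (Cset : Set (stdRep F → F)) :
    Set (stdRep F → F) :=
  {v | ∃ w ∈ Cset, v = fun i => (w i) ^ q}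

/-- `ob N z` is the representative `z̄` of `z` modulo `N−1`: it satisfies
`1 ≤ z̄ ≤ N−1` and `z̄ ≡ z (mod N−1)` if `z > 0`, and `z̄ = 0` if `z = 0`. -/
def ob (N z : ℕ) : ℕ := if z = 0 then 0 else (z - 1) % (N - 1) + 1

/-- The set of monomials `U = {x₀^{d−a₁−a₂} x₁^{a₁} x₂^{a₂} : x₁^{a₁}x₂^{a₂} ∈ U_{d−1,d}}`. -/
def Uproj (F : Type*) [Field F] (q d : ℕ) : Set (MvPolynomial (Fin 3) F) :=
  {M | ∃ a₁ a₂ : ℕ, a₁ ≤ q ^ 2 - 1 ∧ a₂ ≤ q ^ 2 - 1 ∧ a₁ + a₂ ≤ d - 1 ∧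
    (ob (q ^ 2) (q * a₁) : ℤ) + (ob (q ^ 2) (q * a₂) : ℤ) ≤
      2 * ((q : ℤ) ^ 2 - 1) - d - 1 ∧
    M = X 0 ^ (d - a₁ - a₂) * X 1 ^ a₁ * X 2 ^ a₂}

/-- The set of monomials `A₁^d` (over `F_{q²}`). -/
def A1sq (F : Type*) [Field F] (q d : ℕ) : Set (MvPolynomial (Fin 3) F) :=
  {M | ∃ a0 a1 a2 : ℕ, 0 < a0 ∧ a0 + a1 + a2 = d ∧ a1 ≤ q ^ 2 - 1 ∧ a2 ≤ q ^ 2 - 1 ∧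
    M = X 0 ^ a0 * X 1 ^ a1 * X 2 ^ a2}

/-- every monomial of `U` evaluates into `(PRM_{d^⊥}(q²,2))^q`;
moreover `U = A₁^d` whenever `d ≤ 2(q−1)`. -/
lemma pow_mod_aux {F : Type*} [Field F] [Fintype F] (x : F) (hx : x ≠ 0) (e : ℕ) :
    x ^ e = x ^ (e % (Fintype.card F - 1)) := by
  conv_lhs => rw [← Nat.div_add_mod e (Fintype.card F - 1)]
  rw [pow_add, pow_mul, FiniteField.pow_card_sub_one_eq_one x hx, one_pow, one_mul]

lemma pow_congr {F : Type*} [Field F] [Fintype F] (x : F) {e f : ℕ}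
    (h : e ≡ f [MOD Fintype.card F - 1]) (h0 : e = 0 ↔ f = 0) : x ^ e = x ^ f := by
  rcases eq_or_ne e 0 with he | he
  · rw [he, h0.mp he]
  · have hf : f ≠ 0 := fun hf => he (h0.mpr hf)
    rcases eq_or_ne x 0 with hx | hx
    · rw [hx, zero_pow he, zero_pow hf]
    · have h' : e % (Fintype.card F - 1) = f % (Fintype.card F - 1) := h
      rw [pow_mod_aux x hx e, pow_mod_aux x hx f, h']

lemma ob_modEq (N z : ℕ) : ob N z ≡ z [MOD N - 1] := by
  unfold ob
  split
  · subst ‹z = 0›; rfl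
  · have : (z - 1) % (N - 1) ≡ z - 1 [MOD N - 1] := Nat.mod_modEq _ _
    have h := this.add_right 1
    rwa [Nat.sub_add_cancel (Nat.one_le_iff_ne_zero.mpr ‹z ≠ 0›)] at h

lemma ob_le (N z : ℕ) : ob N z ≤ z := by
  unfold ob
  split
  · omega
  · have := Nat.mod_le (z - 1) (N - 1); omega

lemma ob_eq_zero_iff (N z : ℕ) : ob N z = 0 ↔ z = 0 := by
  unfold ob; split <;> simp_all

theorem stmt11 {F : Type*} [Field F] [Fintype F] (q d : ℕ)
    (hq : Fintype.card F = q ^ 2) (h1 : 1 ≤ d) (h2 : d ≤ q ^ 2 - 1) :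
    (∀ M ∈ Uproj F q d,
      ev F M ∈ powq q (PRM F (2 * (q ^ 2 - 1) - d) : Set (stdRep F → F))) ∧
    (d ≤ 2 * (q - 1) → Uproj F q d = A1sq F q d) := by
  have hQ2 : 2 ≤ q ^ 2 := hq ▸ Fintype.one_lt_card
  have hq2 : 2 ≤ q := by
    by_contra h
    have : q ^ 2 ≤ 1 ^ 2 := Nat.pow_le_pow_left (by omega) 2
    omega
  have hQ4 : 4 ≤ q ^ 2 := by
    calc (4 : ℕ) = 2 ^ 2 := rfl
    _ ≤ q ^ 2 := Nat.pow_le_pow_left hq2 2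
  have hQ1 : (1 : ℕ) ≡ q ^ 2 [MOD q ^ 2 - 1] :=
    (Nat.modEq_iff_dvd' (by omega)).mpr ⟨1, by omega⟩
  constructor
  · rintro M ⟨a₁, a₂, ha₁, ha₂, hsum, hob, rfl⟩
    set b₁ := ob (q ^ 2) (q * a₁) with hb₁
    set b₂ := ob (q ^ 2) (q * a₂) with hb₂
    have hcast : ((q ^ 2 : ℕ) : ℤ) = (q : ℤ) ^ 2 := by push_cast; ring
    have hb : b₁ + b₂ + d + 1 ≤ 2 * (q ^ 2 - 1) := by
      rw [← hcast] at hob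
      omega
    set b₀ := 2 * (q ^ 2 - 1) - d - b₁ - b₂ with hb₀
    have hb₀pos : 0 < b₀ := by omega
    refine ⟨ev F (X 0 ^ b₀ * X 1 ^ b₁ * X 2 ^ b₂), ⟨_, ?_, rfl⟩, ?_⟩
    · rw [SetLike.mem_coe, mem_homogeneousSubmodule]
      have : (X 0 ^ b₀ * X 1 ^ b₁ * X 2 ^ b₂ :
          MvPolynomial (Fin 3) F).IsHomogeneous (1 * b₀ + 1 * b₁ + 1 * b₂) :=
        (((isHomogeneous_X F 0).pow b₀).mul ((isHomogeneous_X F 1).pow b₁)).mul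
          ((isHomogeneous_X F 2).pow b₂)
      have heq : 1 * b₀ + 1 * b₁ + 1 * b₂ = 2 * (q ^ 2 - 1) - d := by omega
      rwa [heq] at this
    · funext v
      simp only [ev, LinearMap.pi_apply, AlgHom.toLinearMap_apply, map_mul, map_pow, aeval_X]
      rw [mul_pow, mul_pow, ← pow_mul, ← pow_mul, ← pow_mul]
      have key : ∀ a : ℕ, a ≤ q ^ 2 - 1 → ∀ x : F,
          x ^ a = x ^ (ob (q ^ 2) (q * a) * q) := by
        intro a ha x
        refine (pow_congr x ?_ ?_).symm
        · rw [hq]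
          have h1' : ob (q ^ 2) (q * a) * q ≡ (q * a) * q [MOD q ^ 2 - 1] :=
            (ob_modEq (q ^ 2) (q * a)).mul_right q
          have h2' : (q * a) * q = a * q ^ 2 := by ring
          have h3' : a * q ^ 2 ≡ a * 1 [MOD q ^ 2 - 1] :=
            Nat.ModEq.mul_left a hQ1.symm
          calc ob (q ^ 2) (q * a) * q ≡ a * q ^ 2 [MOD q ^ 2 - 1] := h2' ▸ h1'
            _ ≡ a * 1 [MOD q ^ 2 - 1] := h3'
            _ = a := by ring
        · rw [Nat.mul_eq_zero, ob_eq_zero_iff, Nat.mul_eq_zero]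
          omega
      rw [← key a₁ ha₁, ← key a₂ ha₂]
      have h0 : (v : Fin 3 → F) 0 ^ (d - a₁ - a₂) = (v : Fin 3 → F) 0 ^ (b₀ * q) := by
        have hv := v.2
        have : (v : Fin 3 → F) 0 = 1 ∨ (v : Fin 3 → F) 0 = 0 := by
          rcases hv with h | h | h
          · exact Or.inl h
          · exact Or.inr h.1
          · exact Or.inr h.1
        rcases this with h | h
        · rw [h, one_pow, one_pow]
        · rw [h, zero_pow (by omega), zero_pow (by positivity)]
      rw [h0]
  · intro hd
    ext M
    constructor
    · rintro ⟨a₁, a₂, ha₁, ha₂, hsum, hob, rfl⟩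
      exact ⟨d - a₁ - a₂, a₁, a₂, by omega, by omega, ha₁, ha₂, rfl⟩
    · rintro ⟨a0, a1, a2, ha0, hsum, hA1, hA2, rfl⟩
      refine ⟨a1, a2, hA1, hA2, by omega, ?_, by rw [show d - a1 - a2 = a0 from by omega]⟩
      have o1 : (ob (q ^ 2) (q * a1) : ℤ) ≤ (q : ℤ) * a1 := by
        exact_mod_cast Nat.cast_le.mpr (ob_le (q ^ 2) (q * a1))
      have o2 : (ob (q ^ 2) (q * a2) : ℤ) ≤ (q : ℤ) * a2 := by
        exact_mod_cast Nat.cast_le.mpr (ob_le (q ^ 2) (q * a2))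
      have hs : (a1 : ℤ) + a2 + 1 ≤ d := by exact_mod_cast by omega
      have hdz : (d : ℤ) ≤ 2 * ((q : ℤ) - 1) := by
        have : (d : ℤ) ≤ ((2 * (q - 1) : ℕ) : ℤ) := Nat.cast_le.mpr hd
        have h' : ((2 * (q - 1) : ℕ) : ℤ) = 2 * ((q : ℤ) - 1) := by
          push_cast [Nat.cast_sub (by omega : 1 ≤ q)]; ring
        omega
      have hqz : (2 : ℤ) ≤ q := by exact_mod_cast hq2
      nlinarith [mul_le_mul_of_nonneg_left (show (a1 : ℤ) + a2 ≤ d - 1 by omega)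
        (show (0 : ℤ) ≤ q by omega)]
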